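/- Let G be a matching-covered graph, C a separating cut with cut-contractions G₁ and G₂. If G₁ is bipartite, then C is a tight cut of G (every perfect matching of G meets C exactly once). -/

import Mathlib

open Classical Finset

noncomputable section

namespace PaperPM

variable {V : Type} [Fintype V] [DecidableEq V]

/-- `M` is (the edge set of) a perfect matching of `G`. -/
def IsPM (G : SimpleGraph V) (M : Finset (Sym2 V)) : Prop :=
  (M : Set (Sym2 V)) ⊆ G.edgeSet ∧ ∀ v : V, ∃! e, e ∈ M ∧ v ∈ e

/-- `G` is matching-covered: every edge lies in a perfect matching. -/
def MatchingCovered (G : SimpleGraph V) : Prop :=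
  ∀ e ∈ G.edgeSet, ∃ M, IsPM G M ∧ e ∈ M

/-- incidence (indicator) vector of a set of edges -/
def indVec (M : Finset (Sym2 V)) : Sym2 V → ℝ := fun e => if e ∈ M then 1 else 0

/-- the perfect matching polytope of `G` -/
def pmPolytope (G : SimpleGraph V) : Set (Sym2 V → ℝ) :=
  convexHull ℝ {x | ∃ M, IsPM G M ∧ x = indVec M}

/-- the cut `δ(X)`: edges of `G` with exactly one endpoint in `X` -/
def cutE (G : SimpleGraph V) (X : Set V) : Finset (Sym2 V) :=
  Finset.univ.filter fun e =>
    e ∈ G.edgeSet ∧ ∃ u v : V, e = s(u, v) ∧ u ∈ X ∧ v ∉ X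

/-- `x(A) = Σ_{a ∈ A} x_a` -/
def edgeSum (x : Sym2 V → ℝ) (A : Finset (Sym2 V)) : ℝ := ∑ e ∈ A, x e

/-- the face `P(G;C) = P(G) ∩ {x : x(δ(X)) = 1}` -/
def faceCut (G : SimpleGraph V) (X : Set V) : Set (Sym2 V → ℝ) :=
  {x ∈ pmPolytope G | edgeSum x (cutE G X) = 1}

/-- `δ(X)` is a tight cut -/
def TightCut (G : SimpleGraph V) (X : Set V) : Prop :=
  Odd X.toFinset.card ∧ 1 < X.toFinset.card ∧ X.toFinset.card < Fintype.card V - 1 ∧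
    ∀ M, IsPM G M → (M ∩ cutE G X).card = 1

/-- a brick: non-bipartite matching-covered graph without tight cuts -/
def IsBrick (G : SimpleGraph V) : Prop :=
  MatchingCovered G ∧ ¬ G.Colorable 2 ∧ ∀ X : Set V, ¬ TightCut G X

/-- dimension of a subset of `ℝ^{Sym2 V}` (affine dimension; `-1` for the empty set) -/
def polyDim (s : Set (Sym2 V → ℝ)) : ℤ :=
  if s = ∅ then -1 else (Module.finrank ℝ (vectorSpan ℝ s) : ℤ)

/-- number of bricks in a tight cut decomposition of `G`, via the dimension
formula `dim P(G) = |E| − |V| + 1 − b(G)` of Naddef and Edmonds–Pulleyblank–Lovász. -/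
def brickCount (G : SimpleGraph V) : ℤ :=
  (G.edgeFinset.card : ℤ) - Fintype.card V + 1 - polyDim (pmPolytope G)

/-- (the edge set of) a perfect matching of the contraction `G/X`, viewed inside `G`:
no edge inside `X`, exactly one cut edge (covering the contraction vertex), and every
vertex outside `X` covered exactly once. This keeps multiple parallel cut edges distinct. -/
def IsPMContr (G : SimpleGraph V) (X : Set V) (M : Finset (Sym2 V)) : Prop :=
  (M : Set (Sym2 V)) ⊆ G.edgeSet ∧ (∀ e ∈ M, ¬ ∀ v ∈ e, v ∈ X) ∧
    (M ∩ cutE G X).card = 1 ∧ ∀ v : V, v ∉ X → ∃! e, e ∈ M ∧ v ∈ e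

/-- the contraction `G/X` is matching-covered (every one of its edges, i.e. every
edge of `G` not inside `X`, lies in a perfect matching of `G/X`). -/
def MatchingCoveredContr (G : SimpleGraph V) (X : Set V) : Prop :=
  ∀ e ∈ G.edgeSet, (¬ ∀ v ∈ e, v ∈ X) → ∃ M, IsPMContr G X M ∧ e ∈ M

/-- `δ(X)` is a separating cut: odd, nontrivial, and both cut-contractions
`G/X` and `G/X̄` are matching-covered. -/
def SeparatingCut (G : SimpleGraph V) (X : Set V) : Prop :=
  Odd X.toFinset.card ∧ 1 < X.toFinset.card ∧ X.toFinset.card < Fintype.card V - 1 ∧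
    MatchingCoveredContr G X ∧ MatchingCoveredContr G Xᶜ

/-- the edges of the contraction `G/X`, as edges of `G` -/
def contrEdges (G : SimpleGraph V) (X : Set V) : Finset (Sym2 V) :=
  G.edgeFinset.filter fun e => ¬ ∀ v ∈ e, v ∈ X

/-- the perfect matching polytope of the contraction `G/X`, in the coordinates of `G` -/
def contrPolytope (G : SimpleGraph V) (X : Set V) : Set (Sym2 V → ℝ) :=
  convexHull ℝ {x | ∃ M, IsPMContr G X M ∧ x = indVec M}

/-- number of bricks of the contraction `G/X`, via the dimension formula -/
def brickCountContr (G : SimpleGraph V) (X : Set V) : ℤ :=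
  (contrEdges G X).card - ((Fintype.card V - X.toFinset.card : ℕ) + 1) + 1 -
    polyDim (contrPolytope G X)

/-- the contraction `G/X` is a Birkhoff–von Neumann graph: its perfect matching
polytope is cut out by nonnegativity, the degree equations, and `x(δ(X)) = 1`. -/
def BvNContr (G : SimpleGraph V) (X : Set V) : Prop :=
  contrPolytope G X =
    {x | (∀ e, 0 ≤ x e) ∧ (∀ e : Sym2 V, (e ∉ G.edgeSet ∨ ∀ v ∈ e, v ∈ X) → x e = 0) ∧
      (∀ v : V, v ∉ X → edgeSum x (cutE G {v}) = 1) ∧ edgeSum x (cutE G X) = 1}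

/-- the contraction `G/X` is bipartite -/
def ContrBipartite (G : SimpleGraph V) (X : Set V) : Prop :=
  ∃ (c : V → Bool) (b : Bool), ∀ u v : V, G.Adj u v → (u ∉ X ∨ v ∉ X) →
    (if u ∈ X then b else c u) ≠ (if v ∈ X then b else c v)

/-- `G` is a Birkhoff–von Neumann graph -/
def BvN (G : SimpleGraph V) : Prop :=
  pmPolytope G =
    {x | (∀ e, 0 ≤ x e) ∧ (∀ e : Sym2 V, e ∉ G.edgeSet → x e = 0) ∧
      ∀ v : V, edgeSum x (cutE G {v}) = 1}

/-- `F` is a face of the convex set `P` -/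
def IsFaceOf {E : Type*} [AddCommGroup E] [Module ℝ E] (P F : Set E) : Prop :=
  F ⊆ P ∧ Convex ℝ F ∧ ∀ x ∈ P, ∀ y ∈ P, ∀ t : ℝ, 0 < t → t < 1 →
    t • x + (1 - t) • y ∈ F → x ∈ F ∧ y ∈ F

/-- a vector is integral if all its coordinates are integers -/
def Integral (x : Sym2 V → ℝ) : Prop := ∀ e, ∃ n : ℤ, x e = (n : ℝ)

/-- the Petersen graph, as the Kneser graph `K(5,2)` -/
def petersenGraph : SimpleGraph {s : Finset (Fin 5) // s.card = 2} where
  Adj a b := Disjoint (a : Finset (Fin 5)) (b : Finset (Fin 5))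
  symm := ⟨fun _ _ h => h.symm⟩
  loopless := ⟨fun a (h : Disjoint (a : Finset (Fin 5)) a) => by
    have h0 : (a : Finset (Fin 5)) = ∅ := by
      exact (disjoint_self.mp h).trans Finset.bot_eq_empty
    have h2 := a.2
    rw [h0] at h2
    simp at h2⟩

/-!
Colour `G₁ = G/X̄` properly with two colours and give each vertex of `X` the weight `+1` if its
colour differs from that of the contraction vertex and `-1` otherwise. If `M` covers every vertex
of `X` exactly once, the total weight of `X` is the sum over the edges of `M` of the weights of
their ends in `X`: an edge inside `X` contributes `+1 - 1 = 0`, an edge of `C` contributes `+1`.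
So `|M ∩ C|` equals the total weight of `X`, whatever `M` is. A perfect matching of `G₁` shows
that this weight is `1`, and every perfect matching of `G` covers `X`.
-/

lemma mk_mem_cutE_iff (G : SimpleGraph V) (X : Set V) (u v : V) :
    s(u, v) ∈ cutE G X ↔ G.Adj u v ∧ (u ∈ X ↔ v ∉ X) := by
  simp only [cutE, mem_filter, mem_univ, true_and, SimpleGraph.mem_edgeSet]
  constructor
  · rintro ⟨hadj, x, y, hxy, hx, hy⟩
    refine ⟨hadj, ?_⟩
    rcases Sym2.eq_iff.mp hxy with ⟨rfl, rfl⟩ | ⟨rfl, rfl⟩ <;> tauto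
  · rintro ⟨hadj, huv⟩
    by_cases hu : u ∈ X
    · exact ⟨hadj, u, v, rfl, hu, huv.mp hu⟩
    · exact ⟨hadj, v, u, Sym2.eq_swap, by tauto, hu⟩

lemma cutE_compl (G : SimpleGraph V) (X : Set V) : cutE G Xᶜ = cutE G X := by
  ext e
  induction e using Sym2.ind with
  | _ u v => simp only [mk_mem_cutE_iff, Set.mem_compl_iff]; tauto

/-- The weight of a vertex of `X` in the colour-imbalance count, `b` being the colour of the
contraction vertex. -/
def imbalanceWeight (c : V → Bool) (b : Bool) (v : V) : ℤ := if c v = b then -1 else 1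

section Imbalance

variable {G : SimpleGraph V} {X : Set V} {c : V → Bool} {b : Bool}
  (hin : ∀ u v, G.Adj u v → u ∈ X → v ∈ X → c u ≠ c v)
  (hcut : ∀ u v, G.Adj u v → u ∈ X → v ∉ X → c u ≠ b)
include hin hcut

lemma sum_imbalanceWeight_mem_edge {e : Sym2 V} (he : e ∈ G.edgeSet) :
    ∑ x ∈ X.toFinset, (if x ∈ e then imbalanceWeight c b x else 0) =
      if e ∈ cutE G X then 1 else 0 := by
  induction e using Sym2.ind with
  | _ u v =>
  have huv : u ≠ v := G.ne_of_adj he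
  have hsplit : ∀ x, (if x ∈ s(u, v) then imbalanceWeight c b x else 0) =
      (if u = x then imbalanceWeight c b x else 0) +
        (if v = x then imbalanceWeight c b x else 0) := by
    intro x
    by_cases hxu : u = x <;> by_cases hxv : v = x <;> simp_all [eq_comm]
  rw [sum_congr rfl fun x _ => hsplit x]
  simp only [sum_add_distrib, sum_ite_eq, Set.mem_toFinset, mk_mem_cutE_iff, imbalanceWeight]
  have hvu : G.Adj v u := he.symm
  by_cases hu : u ∈ X <;> by_cases hv : v ∈ X
  · have := hin u v he hu hv
    cases hcu : c u <;> cases hcv : c v <;> cases b <;> simp_all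
  · have := hcut u v he hu hv
    simp_all
  · have := hcut v u hvu hv hu
    simp_all
  · simp_all

lemma card_inter_cutE_eq_sum_imbalanceWeight {M : Finset (Sym2 V)}
    (hM : (M : Set (Sym2 V)) ⊆ G.edgeSet) (hcov : ∀ v ∈ X, ∃! e, e ∈ M ∧ v ∈ e) :
    ((M ∩ cutE G X).card : ℤ) = ∑ x ∈ X.toFinset, imbalanceWeight c b x := by
  have hvertex : ∀ x ∈ X.toFinset,
      ∑ e ∈ M, (if x ∈ e then imbalanceWeight c b x else 0) = imbalanceWeight c b x := by
    intro x hx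
    obtain ⟨e, ⟨heM, hxe⟩, huniq⟩ := hcov x (Set.mem_toFinset.mp hx)
    rw [sum_eq_single_of_mem e heM fun e' he' hne =>
      if_neg fun hxe' => hne (huniq e' ⟨he', hxe'⟩), if_pos hxe]
  calc ((M ∩ cutE G X).card : ℤ)
      = ∑ e ∈ M, if e ∈ cutE G X then (1 : ℤ) else 0 := by
        rw [sum_boole, filter_mem_eq_inter]
    _ = ∑ e ∈ M, ∑ x ∈ X.toFinset, (if x ∈ e then imbalanceWeight c b x else 0) :=
        sum_congr rfl fun e he => (sum_imbalanceWeight_mem_edge hin hcut (hM he)).symm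
    _ = ∑ x ∈ X.toFinset, imbalanceWeight c b x := by
        rw [sum_comm]
        exact sum_congr rfl hvertex

end Imbalance

lemma ContrBipartite.card_inter_cutE_eq {G : SimpleGraph V} {X : Set V}
    (hbip : ContrBipartite G Xᶜ) : ∃ k : ℤ, ∀ M : Finset (Sym2 V),
      (M : Set (Sym2 V)) ⊆ G.edgeSet → (∀ v ∈ X, ∃! e, e ∈ M ∧ v ∈ e) →
        ((M ∩ cutE G X).card : ℤ) = k := by
  obtain ⟨c, b, hcb⟩ := hbip
  have hin : ∀ u v, G.Adj u v → u ∈ X → v ∈ X → c u ≠ c v := fun u v huv hu hv => by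
    simpa [hu, hv] using hcb u v huv (Or.inl (not_not.mpr hu))
  have hcut : ∀ u v, G.Adj u v → u ∈ X → v ∉ X → c u ≠ b := fun u v huv hu hv => by
    simpa [hu, hv] using hcb u v huv (Or.inl (not_not.mpr hu))
  exact ⟨_, fun M hM hcov => card_inter_cutE_eq_sum_imbalanceWeight hin hcut hM hcov⟩

theorem stmt12_general (G : SimpleGraph V) (X : Set V)
    (hsep : SeparatingCut G X) (hbip : ContrBipartite G Xᶜ) :
    TightCut G X := by
  obtain ⟨hodd, hlow, hhigh, -, hcovered⟩ := hsep
  obtain ⟨k, hk⟩ := hbip.card_inter_cutE_eq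
  refine ⟨hodd, hlow, hhigh, fun M ⟨hMG, hMcov⟩ => ?_⟩
  obtain ⟨v, hv⟩ : X.Nonempty := by
    rw [← Set.toFinset_nonempty]
    exact card_pos.mp (by omega)
  obtain ⟨e, ⟨heM, hve⟩, -⟩ := hMcov v
  obtain ⟨M₁, ⟨hM₁G, -, hM₁cut, hM₁cov⟩, -⟩ :=
    hcovered e (hMG heM) fun hXc => hXc v hve hv
  rw [cutE_compl] at hM₁cut
  have hk₁ := hk M₁ hM₁G fun u hu => hM₁cov u (Set.notMem_compl_iff.mpr hu)
  have hk₀ := hk M hMG fun u _ => hMcov u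
  omega

/-- if `C = δ(X)` is a separating cut of a matching-covered graph `G`
and the cut-contraction `G₁ = G/X̄` is bipartite, then `C` is a tight cut of `G`. -/
theorem stmt12 (G : SimpleGraph V) (hG : MatchingCovered G) (X : Set V)
    (hsep : SeparatingCut G X) (hbip : ContrBipartite G Xᶜ) :
    TightCut G X :=
  stmt12_general G X hsep hbip

end PaperPM
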